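/- arXiv:1507.01847 — 6 statements merged into one kernel-verified Lean document; each statement's English description precedes it below -/
import Mathlib

section
/- Let (A, p̄) be a financial system with liquid endowments x ∈ ℝ_+^n, illiquid endowments S ∈ ℝ_+^{n×m}, maximum leverage ratios λ_i^max ≥ 0, an inverse demand function F (continuous and nonincreasing), and a liquidation function γ: [0,p̄]×[0,q̄] → ℝ_+^{n×m}. If γ is nonincreasing (in the componentwise order on [0,p̄]×[0,q̄]), then there exist a greatest and a least clearing payment and price vector: fixed points (p⁺,q⁺) and (p⁻,q⁻) of the clearing mechanism φ such that (p⁻,q⁻) ≤ (p*,q*) ≤ (p⁺,q⁺) componentwise for every fixed point (p*,q*) of φ. -/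
/-- `(p, q)` is a clearing payment and price vector: a fixed point of the clearing
mechanism `φ(p,q) = (p̄ ∧ (x + Sq + Aᵀp), F(∑ i, s_i ∧ γ_i(p,q)))` lying in
`[0,p̄] × [0,q̄]`. -/
def IsClearingVector (n m : ℕ) (pbar : Fin n → ℝ) (a : Fin n → Fin n → ℝ)
    (x : Fin n → ℝ) (S : Fin n → Fin m → ℝ) (qbar : Fin m → ℝ)
    (F : (Fin m → ℝ) → (Fin m → ℝ))
    (γ : (Fin n → ℝ) → (Fin m → ℝ) → Fin n → Fin m → ℝ)
    (p : Fin n → ℝ) (q : Fin m → ℝ) : Prop :=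
  p ∈ Set.Icc (0 : Fin n → ℝ) pbar ∧ q ∈ Set.Icc (0 : Fin m → ℝ) qbar ∧
  (∀ i, p i = min (pbar i) (x i + (∑ k, S i k * q k) + ∑ j, a j i * p j)) ∧
  q = F (fun k => ∑ i, min (S i k) (γ p q i k))

/-- Theorem: existence of greatest and least clearing payments and
prices under a nonincreasing liquidation function.  With the financial system,
inverse demand function `F` (continuous and nonincreasing), and liquidation function
`γ : [0,p̄]×[0,q̄] → ℝ₊^{n×m}` as in the setting, if `γ` is nonincreasing in the
componentwise order then there exist a greatest and a least clearing payment and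
price vector `(p⁺,q⁺) ≥ (p⁻,q⁻)`: every fixed point `(p*,q*)` of the clearing
mechanism satisfies `(p⁻,q⁻) ≤ (p*,q*) ≤ (p⁺,q⁺)` componentwise. -/
theorem clearing_greatest_least_of_nonincreasing_liquidation
    (n m : ℕ)
    (L : Fin n → Fin n → ℝ)
    (hL : ∀ i j, 0 ≤ L i j) (hLdiag : ∀ i, L i i = 0)
    (pbar : Fin n → ℝ) (hpbar : ∀ i, pbar i = ∑ j, L i j)
    (a : Fin n → Fin n → ℝ)
    (ha : ∀ i j, a i j = if 0 < pbar i then L i j / pbar i else 1 / (n : ℝ))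
    (x : Fin n → ℝ) (hx : ∀ i, 0 ≤ x i)
    (S : Fin n → Fin m → ℝ) (hS : ∀ i k, 0 ≤ S i k)
    (lmax : Fin n → ℝ) (hlmax : ∀ i, 0 ≤ lmax i)
    (qbar : Fin m → ℝ) (hqbar : ∀ k, 0 < qbar k)
    (F : (Fin m → ℝ) → (Fin m → ℝ))
    (hFrange : ∀ z : Fin m → ℝ, (∀ k, 0 ≤ z k) → ∀ k, 0 ≤ F z k ∧ F z k ≤ qbar k)
    (hFcont : ContinuousOn F {z : Fin m → ℝ | ∀ k, 0 ≤ z k})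
    (hFanti : ∀ z z' : Fin m → ℝ, (∀ k, 0 ≤ z k) → (∀ k, z k ≤ z' k) →
      ∀ k, F z' k ≤ F z k)
    (γ : (Fin n → ℝ) → (Fin m → ℝ) → Fin n → Fin m → ℝ)
    (hγnonneg : ∀ p ∈ Set.Icc (0 : Fin n → ℝ) pbar, ∀ q ∈ Set.Icc (0 : Fin m → ℝ) qbar,
      ∀ i k, 0 ≤ γ p q i k)
    (hγanti : ∀ p ∈ Set.Icc (0 : Fin n → ℝ) pbar, ∀ q ∈ Set.Icc (0 : Fin m → ℝ) qbar,
      ∀ p' ∈ Set.Icc (0 : Fin n → ℝ) pbar, ∀ q' ∈ Set.Icc (0 : Fin m → ℝ) qbar,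
      p ≤ p' → q ≤ q' → ∀ i k, γ p' q' i k ≤ γ p q i k) :
    ∃ pP : Fin n → ℝ, ∃ qP : Fin m → ℝ, ∃ pM : Fin n → ℝ, ∃ qM : Fin m → ℝ,
      IsClearingVector n m pbar a x S qbar F γ pP qP ∧
      IsClearingVector n m pbar a x S qbar F γ pM qM ∧
      ∀ p : Fin n → ℝ, ∀ q : Fin m → ℝ,
        IsClearingVector n m pbar a x S qbar F γ p q →
          pM ≤ p ∧ qM ≤ q ∧ p ≤ pP ∧ q ≤ qP := by
  classical
  have hpbar0 : (0 : Fin n → ℝ) ≤ pbar := fun i => by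
    rw [hpbar]; exact Finset.sum_nonneg fun j _ => hL i j
  have hqbar0 : (0 : Fin m → ℝ) ≤ qbar := fun k => (hqbar k).le
  have ha0 : ∀ i j, 0 ≤ a i j := by
    intro i j; rw [ha]
    split
    · exact div_nonneg (hL i j) (hpbar0 i)
    · positivity
  haveI : Fact ((0 : Fin n → ℝ) ≤ pbar) := ⟨hpbar0⟩
  haveI : Fact ((0 : Fin m → ℝ) ≤ qbar) := ⟨hqbar0⟩
  set f1 : (Fin n → ℝ) → (Fin m → ℝ) → Fin n → ℝ :=
    fun p q i => min (pbar i) (x i + (∑ k, S i k * q k) + ∑ j, a j i * p j) with hf1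
  set f2 : (Fin n → ℝ) → (Fin m → ℝ) → Fin m → ℝ :=
    fun p q => F (fun k => ∑ i, min (S i k) (γ p q i k)) with hf2
  have hznn : ∀ p ∈ Set.Icc (0 : Fin n → ℝ) pbar, ∀ q ∈ Set.Icc (0 : Fin m → ℝ) qbar,
      ∀ k, 0 ≤ ∑ i, min (S i k) (γ p q i k) := by
    intro p hp q hq k
    exact Finset.sum_nonneg fun i _ => le_min (hS i k) (hγnonneg p hp q hq i k)
  have hf1mem : ∀ p ∈ Set.Icc (0 : Fin n → ℝ) pbar, ∀ q ∈ Set.Icc (0 : Fin m → ℝ) qbar,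
      f1 p q ∈ Set.Icc (0 : Fin n → ℝ) pbar := by
    intro p hp q hq
    constructor
    · intro i
      refine le_min (hpbar0 i) ?_
      have h1 : 0 ≤ ∑ k, S i k * q k :=
        Finset.sum_nonneg fun k _ => mul_nonneg (hS i k) (hq.1 k)
      have h2 : 0 ≤ ∑ j, a j i * p j :=
        Finset.sum_nonneg fun j _ => mul_nonneg (ha0 j i) (hp.1 j)
      have h3 := hx i
      show (0 : ℝ) ≤ _
      linarith
    · intro i; exact min_le_left _ _
  have hf2mem : ∀ p ∈ Set.Icc (0 : Fin n → ℝ) pbar, ∀ q ∈ Set.Icc (0 : Fin m → ℝ) qbar,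
      f2 p q ∈ Set.Icc (0 : Fin m → ℝ) qbar := by
    intro p hp q hq
    exact ⟨fun k => (hFrange _ (hznn p hp q hq) k).1,
           fun k => (hFrange _ (hznn p hp q hq) k).2⟩
  set β := ↥(Set.Icc (0 : Fin n → ℝ) pbar) × ↥(Set.Icc (0 : Fin m → ℝ) qbar) with hβ
  have hmono : ∀ z z' : β, z ≤ z' →
      (f1 z.1.1 z.2.1, f2 z.1.1 z.2.1) ≤ ((f1 z'.1.1 z'.2.1 : Fin n → ℝ), f2 z'.1.1 z'.2.1) := by
    intro z z' h
    obtain ⟨hp, hq⟩ := h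
    constructor
    · intro i
      refine min_le_min le_rfl ?_
      have h1 : (∑ k, S i k * z.2.1 k) ≤ ∑ k, S i k * z'.2.1 k :=
        Finset.sum_le_sum fun k _ => mul_le_mul_of_nonneg_left (hq k) (hS i k)
      have h2 : (∑ j, a j i * z.1.1 j) ≤ ∑ j, a j i * z'.1.1 j :=
        Finset.sum_le_sum fun j _ => mul_le_mul_of_nonneg_left (hp j) (ha0 j i)
      show x i + _ + _ ≤ x i + _ + _
      linarith
    · intro k
      refine hFanti _ _ (hznn _ z'.1.2 _ z'.2.2) ?_ k
      intro k'
      refine Finset.sum_le_sum fun i _ => min_le_min le_rfl ?_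
      exact hγanti _ z.1.2 _ z.2.2 _ z'.1.2 _ z'.2.2 hp hq i k'
  set Φ : β →o β :=
    ⟨fun z => (⟨f1 z.1.1 z.2.1, hf1mem _ z.1.2 _ z.2.2⟩,
               ⟨f2 z.1.1 z.2.1, hf2mem _ z.1.2 _ z.2.2⟩),
     fun z z' h => hmono z z' h⟩ with hΦ
  have hfix_of_clear : ∀ p q, IsClearingVector n m pbar a x S qbar F γ p q →
      ∀ (hp : p ∈ Set.Icc (0 : Fin n → ℝ) pbar) (hq : q ∈ Set.Icc (0 : Fin m → ℝ) qbar),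
      Φ (⟨p, hp⟩, ⟨q, hq⟩) = (⟨p, hp⟩, ⟨q, hq⟩) := by
    intro p q hc hp hq
    obtain ⟨_, _, h3, h4⟩ := hc
    refine Prod.ext ?_ ?_
    · exact Subtype.ext (funext fun i => (h3 i).symm)
    · exact Subtype.ext h4.symm
  have hclear_of_fix : ∀ z : β, Φ z = z →
      IsClearingVector n m pbar a x S qbar F γ z.1.1 z.2.1 := by
    intro z hz
    have h1 : f1 z.1.1 z.2.1 = z.1.1 := congrArg (fun w : β => (w.1 : Fin n → ℝ)) hz
    have h2 : f2 z.1.1 z.2.1 = z.2.1 := congrArg (fun w : β => (w.2 : Fin m → ℝ)) hz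
    exact ⟨z.1.2, z.2.2, fun i => (congrFun h1 i).symm, h2.symm⟩
  set gP := OrderHom.gfp Φ with hgP
  set gM := OrderHom.lfp Φ with hgM
  refine ⟨gP.1.1, gP.2.1, gM.1.1, gM.2.1,
    hclear_of_fix gP (Φ.map_gfp), hclear_of_fix gM (Φ.map_lfp), ?_⟩
  intro p q hc
  have hfix := hfix_of_clear p q hc hc.1 hc.2.1
  have hle : gM ≤ (⟨p, hc.1⟩, ⟨q, hc.2.1⟩) := Φ.lfp_le hfix.le
  have hge : ((⟨p, hc.1⟩, ⟨q, hc.2.1⟩) : β) ≤ gP := Φ.le_gfp hfix.ge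
  exact ⟨hle.1, hle.2, hge.1, hge.2⟩
end

section
/- Consider a market with a single illiquid asset (m = 1) and fix δ > 0 with δ ≤ q̄. Define the single-asset liquidation function on [0,p̄]×[δ,q̄] by γ_i(p,q) = Λ_i(p,q)/q for each firm i. Then (i) γ is continuous on [0,p̄]×[δ,q̄]; (ii) γ is nonincreasing in (p,q) in the componentwise order; and (iii) γ satisfies the minimal liquidation condition: q·(s_i ∧ γ_i(p,q)) = (q s_i) ∧ Λ_i(p,q) for every firm i and every (p,q) ∈ [0,p̄]×[δ,q̄]. -/
/-- The single-asset leverage shortfall of firm `i` at payments `p` and price `q`: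
`Λ_i(p,q) = ([p̄_i − (x_i + ∑_j a_{ji} p_j)]⁺
            − λᵢᵐᵃˣ [(x_i + s_i q + ∑_j a_{ji} p_j) − p̄_i]⁺)⁺`. -/
noncomputable def leverageShortfall1 (n : ℕ) (pbar : Fin n → ℝ)
    (a : Fin n → Fin n → ℝ) (x s lmax : Fin n → ℝ)
    (i : Fin n) (p : Fin n → ℝ) (q : ℝ) : ℝ :=
  max (max (pbar i - (x i + ∑ j, a j i * p j)) 0
      - lmax i * max ((x i + s i * q + ∑ j, a j i * p j) - pbar i) 0) 0

lemma leverageShortfall1_nonneg (n : ℕ) (pbar : Fin n → ℝ)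
    (a : Fin n → Fin n → ℝ) (x s lmax : Fin n → ℝ)
    (i : Fin n) (p : Fin n → ℝ) (q : ℝ) :
    0 ≤ leverageShortfall1 n pbar a x s lmax i p q :=
  le_max_right _ _

lemma leverageShortfall1_continuous (n : ℕ) (pbar : Fin n → ℝ)
    (a : Fin n → Fin n → ℝ) (x s lmax : Fin n → ℝ) (i : Fin n) :
    Continuous (fun pq : (Fin n → ℝ) × ℝ =>
      leverageShortfall1 n pbar a x s lmax i pq.1 pq.2) := by
  unfold leverageShortfall1
  fun_prop

/-- properties of the single-asset liquidation function.  In a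
market with a single illiquid asset (`m = 1`), for `δ > 0` with `δ ≤ q̄`, the
liquidation function `γ_i(p,q) = Λ_i(p,q)/q` on `[0,p̄]×[δ,q̄]` is (i) continuous,
(ii) nonincreasing in `(p,q)` in the componentwise order, and (iii) satisfies the
minimal liquidation condition `q (s_i ∧ γ_i(p,q)) = (q s_i) ∧ Λ_i(p,q)` for every
firm `i`. -/
theorem single_asset_liquidation_function_properties
    (n : ℕ)
    (L : Fin n → Fin n → ℝ)
    (hL : ∀ i j, 0 ≤ L i j) (hLdiag : ∀ i, L i i = 0)
    (pbar : Fin n → ℝ) (hpbar : ∀ i, pbar i = ∑ j, L i j)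
    (a : Fin n → Fin n → ℝ)
    (ha : ∀ i j, a i j = if 0 < pbar i then L i j / pbar i else 1 / (n : ℝ))
    (x : Fin n → ℝ) (hx : ∀ i, 0 ≤ x i)
    (s : Fin n → ℝ) (hs : ∀ i, 0 ≤ s i)
    (lmax : Fin n → ℝ) (hlmax : ∀ i, 0 ≤ lmax i)
    (qbar δ : ℝ) (hδ : 0 < δ) (hδq : δ ≤ qbar) :
    ContinuousOn
      (fun pq : (Fin n → ℝ) × ℝ => fun i =>
        leverageShortfall1 n pbar a x s lmax i pq.1 pq.2 / pq.2)
      (Set.Icc (0 : Fin n → ℝ) pbar ×ˢ Set.Icc δ qbar) ∧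
    (∀ p ∈ Set.Icc (0 : Fin n → ℝ) pbar, ∀ q ∈ Set.Icc δ qbar,
      ∀ p' ∈ Set.Icc (0 : Fin n → ℝ) pbar, ∀ q' ∈ Set.Icc δ qbar,
        p ≤ p' → q ≤ q' → ∀ i,
          leverageShortfall1 n pbar a x s lmax i p' q' / q'
            ≤ leverageShortfall1 n pbar a x s lmax i p q / q) ∧
    (∀ p ∈ Set.Icc (0 : Fin n → ℝ) pbar, ∀ q ∈ Set.Icc δ qbar, ∀ i,
      q * min (s i) (leverageShortfall1 n pbar a x s lmax i p q / q)
        = min (q * s i) (leverageShortfall1 n pbar a x s lmax i p q)) := by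
  have hanneg : ∀ i j, 0 ≤ a i j := by
    intro i j
    rw [ha]
    split_ifs with h
    · exact div_nonneg (hL i j) h.le
    · positivity
  refine ⟨?_, ?_, ?_⟩
  · apply continuousOn_pi.2
    intro i
    apply ContinuousOn.div
    · exact (leverageShortfall1_continuous n pbar a x s lmax i).continuousOn
    · exact (continuous_snd).continuousOn
    · rintro ⟨p, q⟩ ⟨-, hq⟩
      exact ne_of_gt (lt_of_lt_of_le hδ hq.1)
  · rintro p hp q hq p' hp' q' hq' hpp' hqq' i
    have hq0 : 0 < q := lt_of_lt_of_le hδ hq.1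
    have hq'0 : 0 < q' := lt_of_lt_of_le hδ hq'.1
    have hΛ : leverageShortfall1 n pbar a x s lmax i p' q'
        ≤ leverageShortfall1 n pbar a x s lmax i p q := by
      unfold leverageShortfall1
      have hS : ∑ j, a j i * p j ≤ ∑ j, a j i * p' j :=
        Finset.sum_le_sum fun j _ =>
          mul_le_mul_of_nonneg_left (hpp' j) (hanneg j i)
      refine max_le_max (sub_le_sub ?_ ?_) le_rfl
      · exact max_le_max (by linarith) le_rfl
      · refine mul_le_mul_of_nonneg_left (max_le_max ?_ le_rfl) (hlmax i)
        have : s i * q ≤ s i * q' := mul_le_mul_of_nonneg_left hqq' (hs i)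
        linarith
    calc leverageShortfall1 n pbar a x s lmax i p' q' / q'
        ≤ leverageShortfall1 n pbar a x s lmax i p q / q' := by
          gcongr
      _ ≤ leverageShortfall1 n pbar a x s lmax i p q / q := by
          gcongr
          exact leverageShortfall1_nonneg _ _ _ _ _ _ _ _ _
  · rintro p hp q hq i
    have hq0 : 0 < q := lt_of_lt_of_le hδ hq.1
    rw [mul_min_of_nonneg _ _ hq0.le, mul_div_cancel₀ _ hq0.ne']
end

section
/- Fix δ > 0 with δ ≤ q̄_k for all k, and suppose every firm i has s_i ≠ 0. Define the proportional liquidation function on [0,p̄]×[δ,q̄] by γ_{ik}(p,q) = (s_{ik} / Σ_{l=1}^m s_{il} q_l) · Λ_i(p,q) for each firm i and asset k. Then (i) γ is continuous on [0,p̄]×[δ,q̄]; (ii) γ is nonincreasing in (p,q) in the componentwise order; and (iii) γ satisfies the minimal liquidation condition: qᵀ[s_i ∧ γ_i(p,q)] = (qᵀ s_i) ∧ Λ_i(p,q) for every firm i and every (p,q) ∈ [0,p̄]×[δ,q̄]. -/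
/-- The leverage shortfall of firm `i` at payments `p` and prices `q`:
`Λ_i(p,q) = ([p̄_i − (x_i + ∑_j a_{ji} p_j)]⁺
            − λᵢᵐᵃˣ [(x_i + ∑_k s_{ik} q_k + ∑_j a_{ji} p_j) − p̄_i]⁺)⁺`. -/
noncomputable def leverageShortfall (n m : ℕ) (pbar : Fin n → ℝ)
    (a : Fin n → Fin n → ℝ) (x : Fin n → ℝ) (S : Fin n → Fin m → ℝ)
    (lmax : Fin n → ℝ) (i : Fin n) (p : Fin n → ℝ) (q : Fin m → ℝ) : ℝ :=
  max (max (pbar i - (x i + ∑ j, a j i * p j)) 0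
      - lmax i * max ((x i + (∑ k, S i k * q k) + ∑ j, a j i * p j) - pbar i) 0) 0

lemma leverageShortfall_nonneg (n m : ℕ) (pbar : Fin n → ℝ)
    (a : Fin n → Fin n → ℝ) (x : Fin n → ℝ) (S : Fin n → Fin m → ℝ)
    (lmax : Fin n → ℝ) (i : Fin n) (p : Fin n → ℝ) (q : Fin m → ℝ) :
    0 ≤ leverageShortfall n m pbar a x S lmax i p q :=
  le_max_right _ _

lemma leverageShortfall_anti (n m : ℕ) (pbar : Fin n → ℝ)
    (a : Fin n → Fin n → ℝ) (ha : ∀ i j, 0 ≤ a i j)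
    (x : Fin n → ℝ) (S : Fin n → Fin m → ℝ) (hS : ∀ i k, 0 ≤ S i k)
    (lmax : Fin n → ℝ) (hlmax : ∀ i, 0 ≤ lmax i) (i : Fin n)
    (p p' : Fin n → ℝ) (q q' : Fin m → ℝ) (hp : p ≤ p') (hq : q ≤ q') :
    leverageShortfall n m pbar a x S lmax i p' q'
      ≤ leverageShortfall n m pbar a x S lmax i p q := by
  unfold leverageShortfall
  have hA : (∑ j, a j i * p j) ≤ ∑ j, a j i * p' j :=
    Finset.sum_le_sum fun j _ => mul_le_mul_of_nonneg_left (hp j) (ha j i)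
  have hB : (∑ k, S i k * q k) ≤ ∑ k, S i k * q' k :=
    Finset.sum_le_sum fun k _ => mul_le_mul_of_nonneg_left (hq k) (hS i k)
  apply max_le_max _ le_rfl
  apply sub_le_sub
  · exact max_le_max (by linarith) le_rfl
  · exact mul_le_mul_of_nonneg_left (max_le_max (by linarith) le_rfl) (hlmax i)

lemma leverageShortfall_cont (n m : ℕ) (pbar : Fin n → ℝ)
    (a : Fin n → Fin n → ℝ) (x : Fin n → ℝ) (S : Fin n → Fin m → ℝ)
    (lmax : Fin n → ℝ) (i : Fin n) :
    Continuous (fun pq : (Fin n → ℝ) × (Fin m → ℝ) =>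
      leverageShortfall n m pbar a x S lmax i pq.1 pq.2) := by
  unfold leverageShortfall
  fun_prop

/-- properties of the proportional liquidation function.  Fix
`δ > 0` with `δ ≤ q̄_k` for all `k`, and suppose every firm `i` has `s_i ≠ 0`.  The
proportional liquidation function
`γ_{ik}(p,q) = (s_{ik} / ∑_l s_{il} q_l) Λ_i(p,q)` on `[0,p̄]×[δ,q̄]` is
(i) continuous, (ii) nonincreasing in `(p,q)` in the componentwise order, and
(iii) satisfies the minimal liquidation condition
`qᵀ[s_i ∧ γ_i(p,q)] = (qᵀ s_i) ∧ Λ_i(p,q)` for every firm `i`. -/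
theorem proportional_liquidation_function_properties
    (n m : ℕ)
    (L : Fin n → Fin n → ℝ)
    (hL : ∀ i j, 0 ≤ L i j) (hLdiag : ∀ i, L i i = 0)
    (pbar : Fin n → ℝ) (hpbar : ∀ i, pbar i = ∑ j, L i j)
    (a : Fin n → Fin n → ℝ)
    (ha : ∀ i j, a i j = if 0 < pbar i then L i j / pbar i else 1 / (n : ℝ))
    (x : Fin n → ℝ) (hx : ∀ i, 0 ≤ x i)
    (S : Fin n → Fin m → ℝ) (hS : ∀ i k, 0 ≤ S i k)
    (hSne : ∀ i, (fun k => S i k) ≠ 0)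
    (lmax : Fin n → ℝ) (hlmax : ∀ i, 0 ≤ lmax i)
    (qbar : Fin m → ℝ) (δ : ℝ) (hδ : 0 < δ) (hδq : ∀ k, δ ≤ qbar k) :
    ContinuousOn
      (fun pq : (Fin n → ℝ) × (Fin m → ℝ) => fun i k =>
        S i k / (∑ l, S i l * pq.2 l) * leverageShortfall n m pbar a x S lmax i pq.1 pq.2)
      (Set.Icc (0 : Fin n → ℝ) pbar ×ˢ
        Set.Icc (fun _ => δ : Fin m → ℝ) qbar) ∧
    (∀ p ∈ Set.Icc (0 : Fin n → ℝ) pbar,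
      ∀ q ∈ Set.Icc (fun _ => δ : Fin m → ℝ) qbar,
      ∀ p' ∈ Set.Icc (0 : Fin n → ℝ) pbar,
      ∀ q' ∈ Set.Icc (fun _ => δ : Fin m → ℝ) qbar,
        p ≤ p' → q ≤ q' → ∀ i k,
          S i k / (∑ l, S i l * q' l) * leverageShortfall n m pbar a x S lmax i p' q'
            ≤ S i k / (∑ l, S i l * q l) * leverageShortfall n m pbar a x S lmax i p q) ∧
    (∀ p ∈ Set.Icc (0 : Fin n → ℝ) pbar,
      ∀ q ∈ Set.Icc (fun _ => δ : Fin m → ℝ) qbar, ∀ i,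
        (∑ k, q k * min (S i k)
            (S i k / (∑ l, S i l * q l) * leverageShortfall n m pbar a x S lmax i p q))
          = min (∑ k, q k * S i k) (leverageShortfall n m pbar a x S lmax i p q)) := by
  -- nonnegativity of a
  have haN : ∀ i j, 0 ≤ a i j := by
    intro i j; rw [ha]
    split
    · exact div_nonneg (hL i j) (le_of_lt (by assumption))
    · positivity
  -- positivity of the denominator
  have hD : ∀ (i : Fin n) (q : Fin m → ℝ), (fun _ => δ : Fin m → ℝ) ≤ q →
      0 < ∑ l, S i l * q l := by
    intro i q hq
    obtain ⟨l, hl⟩ := Function.ne_iff.mp (hSne i)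
    have hSl : 0 < S i l := lt_of_le_of_ne (hS i l) (Ne.symm hl)
    refine Finset.sum_pos' (fun k _ => mul_nonneg (hS i k) (le_trans hδ.le (hq k))) ?_
    exact ⟨l, Finset.mem_univ l, mul_pos hSl (lt_of_lt_of_le hδ (hq l))⟩
  refine ⟨?_, ?_, ?_⟩
  · -- continuity
    apply continuousOn_pi.mpr; intro i
    apply continuousOn_pi.mpr; intro k
    apply ContinuousOn.mul _ (leverageShortfall_cont n m pbar a x S lmax i).continuousOn
    apply ContinuousOn.div continuousOn_const (by fun_prop)
    rintro ⟨p, q⟩ hpq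
    exact (hD i q (hpq.2.1)).ne'
  · -- antitone
    rintro p hp q hq p' hp' q' hq' hpp hqq i k
    have hDq := hD i q hq.1
    have hDq' := hD i q' hq'.1
    have hDle : (∑ l, S i l * q l) ≤ ∑ l, S i l * q' l :=
      Finset.sum_le_sum fun l _ => mul_le_mul_of_nonneg_left (hqq l) (hS i l)
    have hΛ := leverageShortfall_anti n m pbar a haN x S hS lmax hlmax i p p' q q' hpp hqq
    have hΛ0 := leverageShortfall_nonneg n m pbar a x S lmax i p' q'
    calc S i k / (∑ l, S i l * q' l) * leverageShortfall n m pbar a x S lmax i p' q'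
        ≤ S i k / (∑ l, S i l * q l) * leverageShortfall n m pbar a x S lmax i p' q' := by
          apply mul_le_mul_of_nonneg_right _ hΛ0
          exact div_le_div_of_nonneg_left (hS i k) hDq hDle
      _ ≤ S i k / (∑ l, S i l * q l) * leverageShortfall n m pbar a x S lmax i p q :=
          mul_le_mul_of_nonneg_left hΛ (div_nonneg (hS i k) hDq.le)
  · -- minimal liquidation condition
    rintro p hp q hq i
    set Λ := leverageShortfall n m pbar a x S lmax i p q with hΛdef
    have hΛ0 : 0 ≤ Λ := leverageShortfall_nonneg n m pbar a x S lmax i p q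
    set D := ∑ l, S i l * q l with hDdef
    have hDpos : 0 < D := hD i q hq.1
    have hqS : (∑ k, q k * S i k) = D := by
      rw [hDdef]; exact Finset.sum_congr rfl fun k _ => mul_comm _ _
    rcases le_or_gt Λ D with hcase | hcase
    · have : ∀ k, min (S i k) (S i k / D * Λ) = S i k / D * Λ := by
        intro k
        apply min_eq_right
        rw [div_mul_eq_mul_div, div_le_iff₀ hDpos]
        exact mul_le_mul_of_nonneg_left hcase (hS i k)
      simp only [this]
      rw [hqS, min_eq_right hcase]
      have : ∑ k, q k * (S i k / D * Λ) = (∑ k, S i k * q k) / D * Λ := by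
        rw [Finset.sum_div, Finset.sum_mul]
        exact Finset.sum_congr rfl fun k _ => by ring
      rw [this, ← hDdef, div_self hDpos.ne', one_mul]
    · have : ∀ k, min (S i k) (S i k / D * Λ) = S i k := by
        intro k
        apply min_eq_left
        rw [div_mul_eq_mul_div, le_div_iff₀ hDpos]
        exact mul_le_mul_of_nonneg_left hcase.le (hS i k)
      simp only [this]
      rw [hqS, min_eq_left hcase.le]
end

section
/- Fix a firm i, a price vector q ∈ ℝ_{++}^m with coordinates ordered so that q_1 ≥ q_2 ≥ … ≥ q_m > 0, holdings s_i ∈ ℝ_+^m, and a leverage shortfall value Λ ≥ 0. Define the ‘sell highest-priced assets first’ liquidation amounts γ_{ik} = (1/q_k)(Λ − Σ_{l=1}^{k−1} s_{il} q_l)^+ for k = 1,…,m. Then this strategy satisfies the minimal liquidation condition: Σ_{k=1}^m q_k (s_{ik} ∧ γ_{ik}) = (Σ_{k=1}^m s_{ik} q_k) ∧ Λ. -/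
lemma aux_min_liq (a : ℕ → ℝ) (ha : ∀ k, 0 ≤ a k) (Λ : ℝ) (hΛ : 0 ≤ Λ) (n : ℕ) :
    ∑ k ∈ Finset.range n, min (a k) (max (Λ - ∑ l ∈ Finset.range k, a l) 0)
      = min (∑ k ∈ Finset.range n, a k) Λ := by
  induction n with
  | zero => simp [hΛ]
  | succ n ih =>
    rw [Finset.sum_range_succ, ih, Finset.sum_range_succ]
    set S := ∑ k ∈ Finset.range n, a k with hS
    have han := ha n
    rcases le_total Λ S with h | h
    · have : max (Λ - S) 0 = 0 := by simp [sub_nonpos.mpr h]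
      rw [this]
      have h1 : min (a n) 0 = 0 := min_eq_right han
      have h2 : min S Λ = Λ := min_eq_right h
      have h3 : min (S + a n) Λ = Λ := min_eq_right (by linarith)
      rw [h1, h2, h3, add_zero]
    · have : max (Λ - S) 0 = Λ - S := max_eq_left (by linarith)
      rw [this, min_eq_left h]
      rcases le_total (a n) (Λ - S) with h' | h'
      · rw [min_eq_left h', min_eq_left (by linarith)]
      · rw [min_eq_right h', min_eq_right (by linarith)]
        ring

/-- the ‘sell highest-priced assets first’ strategy satisfies the
minimal liquidation condition.  Fix firm `i` with holdings `s ∈ ℝ₊^m`, prices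
`q ∈ ℝ₊₊^m` ordered so that `q_1 ≥ q_2 ≥ … ≥ q_m > 0`, and leverage shortfall
`Λ ≥ 0`.  With `γ_k = (1/q_k)(Λ − ∑_{l<k} s_l q_l)⁺` one has
`∑_k q_k (s_k ∧ γ_k) = (∑_k s_k q_k) ∧ Λ`. -/
theorem sell_highest_priced_first_minimal_liquidation
    (m : ℕ) (q s : Fin m → ℝ)
    (hq_pos : ∀ k, 0 < q k)
    (hq_sorted : ∀ k l : Fin m, k ≤ l → q l ≤ q k)
    (hs : ∀ k, 0 ≤ s k)
    (Λ : ℝ) (hΛ : 0 ≤ Λ)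
    (γ : Fin m → ℝ)
    (hγ : ∀ k, γ k = (1 / q k) * max (Λ - ∑ l ∈ Finset.Iio k, s l * q l) 0) :
    ∑ k, q k * min (s k) (γ k) = min (∑ k, s k * q k) Λ := by
  classical
  set a : ℕ → ℝ := fun k => if h : k < m then s ⟨k, h⟩ * q ⟨k, h⟩ else 0 with ha_def
  have ha : ∀ k, 0 ≤ a k := by
    intro k
    simp only [ha_def]
    split
    · exact mul_nonneg (hs _) (hq_pos _).le
    · exact le_refl 0
  have hsum : ∀ k : Fin m, ∑ l ∈ Finset.Iio k, s l * q l
      = ∑ l ∈ Finset.range k.val, a l := by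
    intro k
    rw [← Nat.Iio_eq_range, ← Fin.map_valEmbedding_Iio, Finset.sum_map]
    apply Finset.sum_congr rfl
    intro x _
    simp [ha_def, x.2]
  have hterm : ∀ k : Fin m, q k * min (s k) (γ k)
      = min (a k.val) (max (Λ - ∑ l ∈ Finset.range k.val, a l) 0) := by
    intro k
    have hq := hq_pos k
    rw [hγ k, hsum k]
    set M := max (Λ - ∑ l ∈ Finset.range k.val, a l) 0 with hM
    have : q k * min (s k) (1 / q k * M) = min (q k * s k) (q k * (1 / q k * M)) := by
      rcases le_total (s k) (1 / q k * M) with h | h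
      · rw [min_eq_left h, min_eq_left (by nlinarith)]
      · rw [min_eq_right h, min_eq_right (by nlinarith)]
    rw [this]
    have : q k * (1 / q k * M) = M := by field_simp
    rw [this]
    have : a k.val = q k * s k := by simp [ha_def, k.2, mul_comm]
    rw [this]
  calc ∑ k, q k * min (s k) (γ k)
      = ∑ k : Fin m, min (a k.val) (max (Λ - ∑ l ∈ Finset.range k.val, a l) 0) :=
        Finset.sum_congr rfl (fun k _ => hterm k)
    _ = ∑ k ∈ Finset.range m, min (a k) (max (Λ - ∑ l ∈ Finset.range k, a l) 0) := by
        rw [Finset.sum_range]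
    _ = min (∑ k ∈ Finset.range m, a k) Λ := aux_min_liq a ha Λ hΛ m
    _ = min (∑ k, s k * q k) Λ := by
        congr 1
        rw [Finset.sum_range]
        apply Finset.sum_congr rfl
        intro k _
        simp [ha_def, k.2, mul_comm]
end

section
/- Fix a firm i, a price vector q ∈ ℝ_{++}^m with coordinates ordered so that q_1 ≥ q_2 ≥ … ≥ q_m > 0, holdings s_i ∈ ℝ_+^m, and a leverage shortfall value Λ ≥ 0. Define the ‘sell lowest-priced assets first’ liquidation amounts γ_{ik} = (1/q_k)(Λ − Σ_{l=k+1}^{m} s_{il} q_l)^+ for k = 1,…,m. Then this strategy satisfies the minimal liquidation condition: Σ_{k=1}^m q_k (s_{ik} ∧ γ_{ik}) = (Σ_{k=1}^m s_{ik} q_k) ∧ Λ. -/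
/-- the ‘sell lowest-priced assets first’ strategy satisfies the
minimal liquidation condition.  Fix firm `i` with holdings `s ∈ ℝ₊^m`, prices
`q ∈ ℝ₊₊^m` ordered so that `q_1 ≥ q_2 ≥ … ≥ q_m > 0`, and leverage shortfall
`Λ ≥ 0`.  With `γ_k = (1/q_k)(Λ − ∑_{l>k} s_l q_l)⁺` one has
`∑_k q_k (s_k ∧ γ_k) = (∑_k s_k q_k) ∧ Λ`. -/
theorem sell_lowest_priced_first_minimal_liquidation
    (m : ℕ) (q s : Fin m → ℝ)
    (hq_pos : ∀ k, 0 < q k)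
    (hq_sorted : ∀ k l : Fin m, k ≤ l → q l ≤ q k)
    (hs : ∀ k, 0 ≤ s k)
    (Λ : ℝ) (hΛ : 0 ≤ Λ)
    (γ : Fin m → ℝ)
    (hγ : ∀ k, γ k = (1 / q k) * max (Λ - ∑ l ∈ Finset.Ioi k, s l * q l) 0) :
    ∑ k, q k * min (s k) (γ k) = min (∑ k, s k * q k) Λ := by
  -- B j = value of assets with index ≥ j
  set B : ℕ → ℝ := fun j => ∑ l ∈ Finset.univ.filter (fun l : Fin m => j ≤ (l : ℕ)), s l * q l
    with hB
  have hBnonneg : ∀ j, 0 ≤ B j := fun j =>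
    Finset.sum_nonneg fun l _ => mul_nonneg (hs l) (hq_pos l).le
  have hIoi : ∀ k : Fin m, ∑ l ∈ Finset.Ioi k, s l * q l = B ((k : ℕ) + 1) := by
    intro k
    apply Finset.sum_congr _ (fun _ _ => rfl)
    ext l
    simp only [Finset.mem_Ioi, Finset.mem_filter, Finset.mem_univ, true_and, Fin.lt_def]
    omega
  have hstep : ∀ k : Fin m, B (k : ℕ) = B ((k : ℕ) + 1) + s k * q k := by
    intro k
    have hset : (Finset.univ.filter (fun l : Fin m => (k : ℕ) ≤ (l : ℕ)))
        = insert k (Finset.univ.filter (fun l : Fin m => (k : ℕ) + 1 ≤ (l : ℕ))) := by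
      ext l
      simp only [Finset.mem_filter, Finset.mem_univ, true_and, Finset.mem_insert]
      constructor
      · intro h
        rcases eq_or_lt_of_le h with h | h
        · left; exact Fin.ext h.symm
        · right; omega
      · rintro (rfl | h) <;> omega
    have hk : k ∉ Finset.univ.filter (fun l : Fin m => (k : ℕ) + 1 ≤ (l : ℕ)) := by simp
    simp only [hB, hset, Finset.sum_insert hk]
    ring
  -- pointwise identity
  have hterm : ∀ k : Fin m,
      q k * min (s k) (γ k) = min Λ (B (k : ℕ)) - min Λ (B ((k : ℕ) + 1)) := by
    intro k
    have hq := hq_pos k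
    have hqγ : q k * γ k = max (Λ - B ((k : ℕ) + 1)) 0 := by
      rw [hγ k, hIoi k]
      field_simp
    have : q k * min (s k) (γ k) = min (s k * q k) (max (Λ - B ((k : ℕ) + 1)) 0) := by
      rw [mul_min_of_nonneg _ _ hq.le, hqγ, mul_comm]
    rw [this, hstep k]
    have h1 := hBnonneg ((k : ℕ) + 1)
    have h2 : 0 ≤ s k * q k := mul_nonneg (hs k) hq.le
    rcases le_total Λ (B ((k : ℕ) + 1)) with h | h <;>
      rcases le_total Λ (B ((k : ℕ) + 1) + s k * q k) with h' | h' <;>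
      simp only [min_def, max_def] <;> split_ifs <;> linarith
  have hBm : B m = 0 := by
    have : (Finset.univ.filter (fun l : Fin m => m ≤ (l : ℕ))) = ∅ := by
      apply Finset.filter_false_of_mem
      intro l _
      omega
    simp [hB, this]
  have hB0 : B 0 = ∑ k, s k * q k := by
    simp [hB]
  calc ∑ k, q k * min (s k) (γ k)
      = ∑ k : Fin m, (min Λ (B (k : ℕ)) - min Λ (B ((k : ℕ) + 1))) :=
        Finset.sum_congr rfl fun k _ => hterm k
    _ = ∑ k ∈ Finset.range m, (min Λ (B k) - min Λ (B (k + 1))) := by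
        exact Fin.sum_univ_eq_sum_range (fun j => min Λ (B j) - min Λ (B (j + 1))) m
    _ = min Λ (B 0) - min Λ (B m) := Finset.sum_range_sub' _ m
    _ = min (∑ k, s k * q k) Λ := by
        rw [hB0, hBm, min_comm]
        simp [hΛ]
end

section
/- Consider a market with a single illiquid asset (m = 1). Let (A, p̄) be a financial system with liquid endowments x ∈ ℝ_+^n, illiquid endowments s ∈ ℝ_+^n, maximum leverage ratios λ_i^max ≥ 0, and an inverse demand function F: ℝ_+ → [0,q̄] that is continuous and nonincreasing with δ := F(Σ_{i=1}^n s_i) > 0. Define the single-asset liquidation function γ_i(p,q) = Λ_i(p,q)/q on [0,p̄]×[δ,q̄]. Then there exist a greatest and a least clearing payment and price vector in [0,p̄]×[δ,q̄]: pairs (p⁺,q⁺) ≥ (p⁻,q⁻) satisfying p* = p̄ ∧ (x + q* s + Aᵀp*) and q* = F(Σ_{i=1}^n [s_i ∧ γ_i(p*,q*)]), such that every such fixed point (p*,q*) in [0,p̄]×[δ,q̄] satisfies (p⁻,q⁻) ≤ (p*,q*) ≤ (p⁺,q⁺) componentwise. -/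
/-- `(p, q) ∈ [0,p̄] × [δ,q̄]` is a single-asset clearing payment and price vector
for the liquidation function `γ_i(p,q) = Λ_i(p,q)/q`:
`p = p̄ ∧ (x + q s + Aᵀ p)` and `q = F(∑ i, s_i ∧ γ_i(p,q))`. -/
noncomputable def IsClearing1 (n : ℕ) (pbar : Fin n → ℝ) (a : Fin n → Fin n → ℝ)
    (x s lmax : Fin n → ℝ) (qbar δ : ℝ) (F : ℝ → ℝ)
    (p : Fin n → ℝ) (q : ℝ) : Prop :=
  p ∈ Set.Icc (0 : Fin n → ℝ) pbar ∧ q ∈ Set.Icc δ qbar ∧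
  (∀ i, p i = min (pbar i) (x i + q * s i + ∑ j, a j i * p j)) ∧
  q = F (∑ i, min (s i) (leverageShortfall1 n pbar a x s lmax i p q / q))

/-- greatest and least clearing payments and prices for the
single-asset leverage model.  In a market with a single illiquid asset, with
inverse demand function `F : ℝ₊ → [0,q̄]` continuous and nonincreasing and
`δ := F(∑ i, s_i) > 0`, using the liquidation function `γ_i(p,q) = Λ_i(p,q)/q` on
`[0,p̄]×[δ,q̄]`, there exist a greatest and a least clearing payment and price
vector `(p⁺,q⁺) ≥ (p⁻,q⁻)`: every fixed point `(p*,q*)` in `[0,p̄]×[δ,q̄]`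
satisfies `(p⁻,q⁻) ≤ (p*,q*) ≤ (p⁺,q⁺)` componentwise. -/
theorem single_asset_greatest_least_clearing
    (n : ℕ)
    (L : Fin n → Fin n → ℝ)
    (hL : ∀ i j, 0 ≤ L i j) (hLdiag : ∀ i, L i i = 0)
    (pbar : Fin n → ℝ) (hpbar : ∀ i, pbar i = ∑ j, L i j)
    (a : Fin n → Fin n → ℝ)
    (ha : ∀ i j, a i j = if 0 < pbar i then L i j / pbar i else 1 / (n : ℝ))
    (x : Fin n → ℝ) (hx : ∀ i, 0 ≤ x i)
    (s : Fin n → ℝ) (hs : ∀ i, 0 ≤ s i)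
    (lmax : Fin n → ℝ) (hlmax : ∀ i, 0 ≤ lmax i)
    (qbar : ℝ) (hqbar : 0 < qbar)
    (F : ℝ → ℝ)
    (hFrange : ∀ z : ℝ, 0 ≤ z → 0 ≤ F z ∧ F z ≤ qbar)
    (hFcont : ContinuousOn F (Set.Ici (0 : ℝ)))
    (hFanti : ∀ z z' : ℝ, 0 ≤ z → z ≤ z' → F z' ≤ F z)
    (hδ : 0 < F (∑ i, s i)) :
    ∃ pP : Fin n → ℝ, ∃ qP : ℝ, ∃ pM : Fin n → ℝ, ∃ qM : ℝ,
      IsClearing1 n pbar a x s lmax qbar (F (∑ i, s i)) F pP qP ∧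
      IsClearing1 n pbar a x s lmax qbar (F (∑ i, s i)) F pM qM ∧
      ∀ p : Fin n → ℝ, ∀ q : ℝ,
        IsClearing1 n pbar a x s lmax qbar (F (∑ i, s i)) F p q →
          pM ≤ p ∧ qM ≤ q ∧ p ≤ pP ∧ q ≤ qP := by
  classical
  set δ := F (∑ i, s i) with hδdef
  have hs0 : (0:ℝ) ≤ ∑ i, s i := Finset.sum_nonneg fun i _ => hs i
  have hδq : δ ≤ qbar := (hFrange _ hs0).2
  have ha0 : ∀ i j, 0 ≤ a i j := by
    intro i j
    rw [ha]
    split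
    · exact div_nonneg (hL i j) (le_of_lt ‹_›)
    · positivity
  have hpbar0 : (0:Fin n → ℝ) ≤ pbar := fun i => (hpbar i) ▸ Finset.sum_nonneg fun j _ => hL i j
  haveI : Fact ((0:Fin n → ℝ) ≤ pbar) := ⟨hpbar0⟩
  haveI : Fact (δ ≤ qbar) := ⟨hδq⟩
  have hΛ0 : ∀ i p q, 0 ≤ leverageShortfall1 n pbar a x s lmax i p q :=
    fun i p q => le_max_right _ _
  have hΛanti : ∀ (i : Fin n) (p p' : Fin n → ℝ) (q q' : ℝ), p ≤ p' → q ≤ q' →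
      leverageShortfall1 n pbar a x s lmax i p' q' ≤ leverageShortfall1 n pbar a x s lmax i p q := by
    intro i p p' q q' hp hq
    simp only [leverageShortfall1]
    have hS : ∑ j, a j i * p j ≤ ∑ j, a j i * p' j :=
      Finset.sum_le_sum fun j _ => mul_le_mul_of_nonneg_left (hp j) (ha0 j i)
    refine max_le_max (sub_le_sub (max_le_max (by linarith) le_rfl) ?_) le_rfl
    refine mul_le_mul_of_nonneg_left (max_le_max ?_ le_rfl) (hlmax i)
    have := mul_le_mul_of_nonneg_left hq (hs i)
    linarith
  set G : (Fin n → ℝ) → ℝ → ℝ :=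
    fun p q => ∑ i, min (s i) (leverageShortfall1 n pbar a x s lmax i p q / q) with hGdef
  have hG0 : ∀ p q, 0 < q → 0 ≤ G p q := fun p q hq0 =>
    Finset.sum_nonneg fun i _ => le_min (hs i) (div_nonneg (hΛ0 i p q) hq0.le)
  have hGle : ∀ p q, G p q ≤ ∑ i, s i :=
    fun p q => Finset.sum_le_sum fun i _ => min_le_left _ _
  have hGanti : ∀ (p p' : Fin n → ℝ) (q q' : ℝ), p ≤ p' → 0 < q → q ≤ q' → G p' q' ≤ G p q := by
    intro p p' q q' hp hq0 hq
    refine Finset.sum_le_sum fun i _ => min_le_min le_rfl ?_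
    exact div_le_div₀ (hΛ0 i p q) (hΛanti i p p' q q' hp hq) hq0 hq
  set Phi1 : (Fin n → ℝ) → ℝ → (Fin n → ℝ) :=
    fun p q i => min (pbar i) (x i + q * s i + ∑ j, a j i * p j) with hPhi1def
  have hPhi1mem : ∀ (p : Fin n → ℝ) (q : ℝ), 0 ≤ p → δ ≤ q →
      Phi1 p q ∈ Set.Icc (0 : Fin n → ℝ) pbar := by
    intro p q hp hq
    rw [Set.mem_Icc]
    constructor
    · intro i
      simp only [hPhi1def]
      refine le_min (hpbar0 i) ?_
      have h1 : 0 ≤ q * s i := mul_nonneg (le_trans hδ.le hq) (hs i)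
      have h2 : 0 ≤ ∑ j, a j i * p j :=
        Finset.sum_nonneg fun j _ => mul_nonneg (ha0 j i) (hp j)
      have h3 := hx i
      simp only [Pi.zero_apply]
      linarith
    · intro i
      simp only [hPhi1def]
      exact min_le_left _ _
  have hPhi1mono : ∀ (p p' : Fin n → ℝ) (q q' : ℝ), p ≤ p' → q ≤ q' →
      Phi1 p q ≤ Phi1 p' q' := by
    intro p p' q q' hp hq i
    simp only [hPhi1def]
    refine min_le_min le_rfl ?_
    have h1 : q * s i ≤ q' * s i := mul_le_mul_of_nonneg_right hq (hs i)
    have h2 : ∑ j, a j i * p j ≤ ∑ j, a j i * p' j :=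
      Finset.sum_le_sum fun j _ => mul_le_mul_of_nonneg_left (hp j) (ha0 j i)
    exact add_le_add (add_le_add le_rfl h1) h2
  have hFGmem : ∀ (p : Fin n → ℝ) (q : ℝ), δ ≤ q → F (G p q) ∈ Set.Icc δ qbar := by
    intro p q hq
    have hq0 : 0 < q := lt_of_lt_of_le hδ hq
    exact ⟨hFanti _ _ (hG0 p q hq0) (hGle p q), (hFrange _ (hG0 p q hq0)).2⟩
  have hFGmono : ∀ (p p' : Fin n → ℝ) (q q' : ℝ), p ≤ p' → δ ≤ q → q ≤ q' →
      F (G p q) ≤ F (G p' q') := by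
    intro p p' q q' hp hq hqq
    have hq0 : 0 < q := lt_of_lt_of_le hδ hq
    exact hFanti _ _ (hG0 p' q' (lt_of_lt_of_le hq0 hqq)) (hGanti p p' q q' hp hq0 hqq)
  let f : (Set.Icc (0 : Fin n → ℝ) pbar × Set.Icc δ qbar) →o
      (Set.Icc (0 : Fin n → ℝ) pbar × Set.Icc δ qbar) :=
    { toFun := fun z =>
        (⟨Phi1 z.1.1 z.2.1, hPhi1mem _ _ z.1.2.1 z.2.2.1⟩,
         ⟨F (G z.1.1 z.2.1), hFGmem _ _ z.2.2.1⟩)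
      monotone' := by
        intro z w h
        exact ⟨hPhi1mono _ _ _ _ h.1 h.2, hFGmono _ _ _ _ h.1 z.2.2.1 h.2⟩ }
  have fix_clearing : ∀ z, f z = z →
      IsClearing1 n pbar a x s lmax qbar δ F z.1.1 z.2.1 := by
    intro z hz
    have h1 : Phi1 z.1.1 z.2.1 = z.1.1 := congrArg (fun w => (w.1 : Fin n → ℝ)) hz
    have h2 : F (G z.1.1 z.2.1) = z.2.1 := congrArg (fun w => (w.2 : ℝ)) hz
    refine ⟨z.1.2, z.2.2, fun i => ?_, h2.symm⟩
    have := (congrFun h1 i).symm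
    simpa only [hPhi1def] using this
  have hfM : f (OrderHom.lfp f) = OrderHom.lfp f := OrderHom.map_lfp f
  have hfP : f (OrderHom.gfp f) = OrderHom.gfp f := OrderHom.map_gfp f
  refine ⟨(OrderHom.gfp f).1.1, (OrderHom.gfp f).2.1, (OrderHom.lfp f).1.1, (OrderHom.lfp f).2.1,
    fix_clearing _ hfP, fix_clearing _ hfM, ?_⟩
  intro p q hcl
  have hz : f (⟨p, hcl.1⟩, ⟨q, hcl.2.1⟩) = (⟨p, hcl.1⟩, ⟨q, hcl.2.1⟩) := by
    refine Prod.ext ?_ ?_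
    · refine Subtype.ext (funext fun i => ?_)
      simp only [hPhi1def]
      exact (hcl.2.2.1 i).symm
    · exact Subtype.ext hcl.2.2.2.symm
  have hM := OrderHom.lfp_le_fixed f hz
  have hP := OrderHom.le_gfp f hz.ge
  exact ⟨hM.1, hM.2, hP.1, hP.2⟩
end
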